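/- arXiv:2406.19305 — 2 statements merged into one kernel-verified Lean document; each statement's English description precedes it below -/
import Mathlib

section
/- Let ι be a nonempty finite index set, let f, c, S, w : ι → ℝ, and let ε > 0. Assume that f(i) > 0 for all i, and that for every i: if w(i) ≥ 0 then c(i)·S(i) ≥ f(i) + ε, while if w(i) < 0 then S(i) = 0. Set ξ = min(ε, min_i f(i)), which is positive. Then Σ_i (f(i) − c(i)·S(i))·w(i) ≤ −ξ · Σ_i |w(i)|. -/
lemma mul_le_neg_mul_abs_of_sign {d w ξ : ℝ} (hnonneg : 0 ≤ w → d ≤ -ξ) (hneg : w < 0 → ξ ≤ d) :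
    d * w ≤ -ξ * |w| := by
  rcases le_or_gt 0 w with hw | hw
  · rw [abs_of_nonneg hw]
    exact mul_le_mul_of_nonneg_right (hnonneg hw) hw
  · rw [abs_of_neg hw, neg_mul_neg]
    exact mul_le_mul_of_nonpos_right (hneg hw) hw.le

/-- Negative-drift estimate: if every movement with nonnegative weight is served
with margin `ε` above its demand and movements with negative weight receive no
service, then the drift `Σ (f i − c i · S i) · w i` is bounded above by
`−ξ · Σ |w i|` where `ξ = min ε (min_i f i) > 0`. -/
theorem stmt8 {ι : Type*} [Fintype ι] [Nonempty ι]
    (f c S w : ι → ℝ) (ε : ℝ) (hε : 0 < ε) (hf : ∀ i, 0 < f i)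
    (hserve : ∀ i, 0 ≤ w i → f i + ε ≤ c i * S i)
    (hzero : ∀ i, w i < 0 → S i = 0) :
    0 < min ε (Finset.univ.inf' Finset.univ_nonempty f) ∧
      ∑ i, (f i - c i * S i) * w i ≤
        -(min ε (Finset.univ.inf' Finset.univ_nonempty f)) * ∑ i, |w i| := by
  set ξ := min ε (Finset.univ.inf' Finset.univ_nonempty f)
  have hξε : ξ ≤ ε := min_le_left _ _
  have hξf (i : ι) : ξ ≤ f i := (min_le_right _ _).trans (Finset.inf'_le _ (Finset.mem_univ i))
  refine ⟨lt_min hε ((Finset.lt_inf'_iff _).2 fun i _ => hf i), ?_⟩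
  rw [Finset.mul_sum]
  refine Finset.sum_le_sum fun i _ => mul_le_neg_mul_abs_of_sign ?_ ?_
  · intro hw
    linarith [hserve i hw]
  · intro hw
    simpa [hzero i hw] using hξf i
end

section
/- Let (Ω, F, μ) be a probability space, let C : Ω → ℝ be measurable with 0 ≤ C(ω) ≤ C_max for μ-almost every ω, where C_max ≥ 0. Let x ≥ 0 and B ≥ 0 be reals and let w be a real number with |w| ≤ x + B. Then (∫ C dμ − ∫ min(C(ω), x) dμ) · w ≤ C_max · (C_max + B). -/
/-!
Write `g = C - min C x`. Pointwise `0 ≤ g ≤ C ≤ C_max`, so the service gap `∫ g` lies in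
`[0, C_max]`, and `g = 0` almost everywhere once `C_max ≤ x`. Hence the gap vanishes for
`C_max ≤ x`, while for `x < C_max` the weight satisfies `|w| ≤ x + B < C_max + B`.
-/

open MeasureTheory

lemma sub_min_mem_Icc {c x : ℝ} (hc : 0 ≤ c) (hx : 0 ≤ x) : c - min c x ∈ Set.Icc 0 c :=
  ⟨sub_nonneg.2 (min_le_left c x), sub_le_self c (le_min hc hx)⟩

section ServiceGap

variable {Ω : Type*} [MeasurableSpace Ω] {μ : Measure Ω} {C : Ω → ℝ} {M x : ℝ}

lemma integral_min_eq_integral_of_ae_le (hle : M ≤ x) (hbdd : ∀ᵐ ω ∂μ, C ω ≤ M) :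
    ∫ ω, min (C ω) x ∂μ = ∫ ω, C ω ∂μ :=
  integral_congr_ae <| hbdd.mono fun _ h ↦ min_eq_left (h.trans hle)

lemma integral_sub_integral_min_mem_Icc [IsProbabilityMeasure μ] (hC : AEMeasurable C μ)
    (hx : 0 ≤ x) (hbdd : ∀ᵐ ω ∂μ, C ω ∈ Set.Icc 0 M) :
    (∫ ω, C ω ∂μ) - ∫ ω, min (C ω) x ∂μ ∈ Set.Icc 0 M := by
  have hC_int : Integrable C μ := Integrable.of_mem_Icc 0 M hC hbdd
  have hmin_int : Integrable (fun ω ↦ min (C ω) x) μ := hC_int.inf (integrable_const x)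
  have hgap : ∀ᵐ ω ∂μ, C ω - min (C ω) x ∈ Set.Icc 0 M :=
    hbdd.mono fun _ h ↦ Set.Icc_subset_Icc_right h.2 (sub_min_mem_Icc h.1 hx)
  rw [← integral_sub hC_int hmin_int]
  refine ⟨integral_nonneg_of_ae (hgap.mono fun _ h ↦ h.1), ?_⟩
  calc ∫ ω, C ω - min (C ω) x ∂μ ≤ ∫ _, M ∂μ :=
        integral_mono_ae (hC_int.sub hmin_int) (integrable_const M) (hgap.mono fun _ h ↦ h.2)
    _ = M := by simp

end ServiceGap

/-- Quantitative form of the paper's Lemma 1: the product of the mean service gap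
with a weight `w` satisfying `|w| ≤ x + B` is uniformly bounded by
`C_max · (C_max + B)`. -/
theorem stmt10 {Ω : Type*} [MeasurableSpace Ω] (μ : Measure Ω)
    [IsProbabilityMeasure μ] (C : Ω → ℝ) (hC : Measurable C)
    (C_max : ℝ) (hCmax : 0 ≤ C_max)
    (hbdd : ∀ᵐ ω ∂μ, 0 ≤ C ω ∧ C ω ≤ C_max)
    (x B w : ℝ) (hx : 0 ≤ x) (hB : 0 ≤ B) (hw : |w| ≤ x + B) :
    ((∫ ω, C ω ∂μ) - ∫ ω, min (C ω) x ∂μ) * w ≤ C_max * (C_max + B) := by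
  rcases le_or_gt C_max x with hx_large | hx_small
  · rw [integral_min_eq_integral_of_ae_le hx_large (hbdd.mono fun _ h ↦ h.2), sub_self, zero_mul]
    positivity
  · obtain ⟨hgap_nonneg, hgap_le⟩ := integral_sub_integral_min_mem_Icc hC.aemeasurable hx hbdd
    calc ((∫ ω, C ω ∂μ) - ∫ ω, min (C ω) x ∂μ) * w
        ≤ ((∫ ω, C ω ∂μ) - ∫ ω, min (C ω) x ∂μ) * |w| :=
          mul_le_mul_of_nonneg_left (le_abs_self w) hgap_nonneg
      _ ≤ C_max * (C_max + B) := mul_le_mul hgap_le (by linarith) (abs_nonneg w) hCmax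
end
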